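/- Reduction of F3 at y = 1: for multiplicative characters A, A', B, B', C of F_q and x ∈ F_q, F3(A, A'; B, B'; C; x, 1) = B'(-1)·C(-1)·3F2(A, B, Ā'·B̄'·C; C·B̄', C·Ā' | x). -/

import Mathlib

open scoped BigOperators Classical

noncomputable section

variable {F : Type*} [Field F] [Fintype F]

instance : Fintype (MulChar F ℂ) := Fintype.ofFinite _

/-- Jacobi-type sum `J(χ,λ) = Σ_u χ(u) λ(1-u)`. -/
def Jsum (A B : MulChar F ℂ) : ℂ := ∑ u : F, A u * B (1 - u)

/-- Finite field binomial coefficient `(A choose B) = B(-1) J(A, B⁻¹)`. -/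
def binom (A B : MulChar F ℂ) : ℂ := B (-1) * Jsum A B⁻¹

/-- Finite field Gauss hypergeometric `₂F₁(A,B;C|x)` (normalized as in the paper). -/
def H2F1 (A B C : MulChar F ℂ) (x : F) : ℂ :=
  (1 : MulChar F ℂ) x * (B * C) (-1) *
    ∑ y : F, B y * (B⁻¹ * C) (1 - y) * A⁻¹ (1 - x * y)

/-- Finite field `₃F₂`. -/
def H3F2 (A0 A1 A2 B1 B2 : MulChar F ℂ) (x : F) : ℂ :=
  (1 / ((Fintype.card F : ℂ) - 1)) *
    ∑ χ : MulChar F ℂ, binom (A0 * χ) χ * binom (A1 * χ) (B1 * χ) *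
      binom (A2 * χ) (B2 * χ) * χ x

/-- Finite field Appell series `F₃`. -/
def AF3 (A A' B B' C : MulChar F ℂ) (x y : F) : ℂ :=
  (1 : MulChar F ℂ) (x * y) * B (-1) * B' (-1) *
    ∑ u : F, ∑ v : F, B u * B' v * (C * B⁻¹ * B'⁻¹) (1 - u - v) *
      A⁻¹ (1 - u * x) * A'⁻¹ (1 - v * y)

set_option linter.unusedSectionVars false

lemma sq_one (X : MulChar F ℂ) : X (-1) * X (-1) = 1 := by
  rw [← map_mul, neg_mul_neg, mul_one, MulChar.map_one]

lemma invAtNeg (X : MulChar F ℂ) : X⁻¹ (-1) = X (-1) := by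
  rw [MulChar.inv_apply', inv_neg_one]

lemma sum_chars (a : F) :
    ∑ χ : MulChar F ℂ, χ a = if a = 1 then ((Fintype.card F : ℂ) - 1) else 0 := by
  split_ifs with h
  · subst h
    simp only [MulChar.map_one, Finset.sum_const, Finset.card_univ, nsmul_eq_mul, mul_one]
    have h1 : Fintype.card (MulChar F ℂ) = Fintype.card F - 1 := by
      have := MulChar.card_eq_card_units_of_hasEnoughRootsOfUnity F ℂ
      simpa [Nat.card_eq_fintype_card, Fintype.card_units] using this
    rw [h1, Nat.cast_sub Fintype.card_pos, Nat.cast_one]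
  · by_cases hu : IsUnit a
    · obtain ⟨χ₀, hχ₀⟩ := MulChar.exists_apply_ne_one_of_hasEnoughRootsOfUnity F ℂ h
      have key : χ₀ a * ∑ χ : MulChar F ℂ, χ a = ∑ χ : MulChar F ℂ, χ a := by
        rw [Finset.mul_sum]
        exact Fintype.sum_bijective (χ₀ * ·) (Group.mulLeft_bijective χ₀)
          _ _ (fun χ => (MulChar.mul_apply χ₀ χ a).symm)
      have h2 : (χ₀ a - 1) * ∑ χ : MulChar F ℂ, χ a = 0 := by linear_combination key
      rcases mul_eq_zero.mp h2 with h3 | h3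
      · exact absurd (sub_eq_zero.mp h3) hχ₀
      · exact h3
    · exact Finset.sum_eq_zero fun χ _ => χ.map_nonunit hu

lemma Jsum_comm (A B : MulChar F ℂ) : Jsum A B = Jsum B A := by
  unfold Jsum
  rw [← (Equiv.subLeft (1:F)).sum_comp (fun u => A u * B (1 - u))]
  simp only [Equiv.subLeft_apply, sub_sub_cancel]
  exact Finset.sum_congr rfl fun u _ => mul_comm _ _

lemma Jsum_reflect (A B : MulChar F ℂ) : Jsum A B = A (-1) * Jsum A (A * B)⁻¹ := by
  unfold Jsum
  rw [Finset.mul_sum]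
  have hsub : ∀ (f : F → ℂ), f 0 = 0 → f 1 = 0 →
      ∑ u : F, f u = ∑ u ∈ Finset.univ.filter (fun u : F => u ≠ 0 ∧ u ≠ 1), f u := by
    intro f h0 h1
    refine (Finset.sum_subset (Finset.filter_subset _ _) ?_).symm
    intro u _ hu
    simp only [Finset.mem_filter, Finset.mem_univ, true_and, not_and_or, not_not] at hu
    rcases hu with h | h <;> subst h <;> assumption
  rw [hsub (fun u => A u * B (1 - u)) (by simp [MulChar.map_zero]) (by simp [MulChar.map_zero]),
    hsub (fun u => A (-1) * (A u * (A * B)⁻¹ (1 - u))) (by simp [MulChar.map_zero])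
      (by simp [MulChar.map_zero])]
  refine Finset.sum_nbij' (fun u => u / (u - 1)) (fun u => u / (u - 1)) ?_ ?_ ?_ ?_ ?_
  · intro u hu
    simp only [Finset.mem_filter, Finset.mem_univ, true_and] at hu ⊢
    have h1 : u - 1 ≠ 0 := sub_ne_zero.mpr hu.2
    constructor
    · exact div_ne_zero hu.1 h1
    · intro hc
      rw [div_eq_one_iff_eq h1] at hc
      exact one_ne_zero (by linear_combination hc : (1:F) = 0)
  · intro u hu
    simp only [Finset.mem_filter, Finset.mem_univ, true_and] at hu ⊢
    have h1 : u - 1 ≠ 0 := sub_ne_zero.mpr hu.2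
    constructor
    · exact div_ne_zero hu.1 h1
    · intro hc
      rw [div_eq_one_iff_eq h1] at hc
      exact one_ne_zero (by linear_combination hc : (1:F) = 0)
  · intro u hu
    simp only [Finset.mem_filter, Finset.mem_univ, true_and] at hu
    have h1 : u - 1 ≠ 0 := sub_ne_zero.mpr hu.2
    field_simp
    ring
  · intro u hu
    simp only [Finset.mem_filter, Finset.mem_univ, true_and] at hu
    have h1 : u - 1 ≠ 0 := sub_ne_zero.mpr hu.2
    field_simp
    ring
  · intro u hu
    simp only [Finset.mem_filter, Finset.mem_univ, true_and] at hu
    have h1 : u - 1 ≠ 0 := sub_ne_zero.mpr hu.2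
    have h2 : (1:F) - u ≠ 0 := sub_ne_zero.mpr (Ne.symm hu.2)
    have e1 : (1 : F) - u / (u - 1) = (1 - u)⁻¹ := by
      field_simp
      ring
    rw [e1, MulChar.inv_apply', inv_inv, MulChar.mul_apply]
    have e2 : A (u / (u - 1)) * A (1 - u) = A (-1) * A u := by
      rw [← map_mul, ← map_mul]
      congr 1
      field_simp
      ring
    have sq := sq_one A
    linear_combination (-(A (-1) * B (1 - u))) * e2 - (A u * B (1 - u)) * sq

lemma sum_shift_scale (D E : MulChar F ℂ) {c : F} (hc : c ≠ 0) :
    ∑ u : F, D u * E (c - u) = (D * E) c * Jsum D E := by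
  unfold Jsum
  rw [Finset.mul_sum, ← Equiv.sum_comp (Equiv.mulLeft₀ c hc) (fun u => D u * E (c - u))]
  refine Finset.sum_congr rfl fun w _ => ?_
  rw [show (Equiv.mulLeft₀ c hc) w = c * w from rfl, MulChar.mul_apply,
    show c - c * w = c * (1 - w) by ring, map_mul, map_mul]
  ring

lemma sum_binom (A : MulChar F ℂ) {z : F} (hz : z ≠ 0) :
    ∑ χ : MulChar F ℂ, binom (A * χ) χ * χ z
      = ((Fintype.card F : ℂ) - 1) * A⁻¹ (1 - z) := by
  have step : ∀ χ : MulChar F ℂ, binom (A * χ) χ * χ z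
      = ∑ r : F, A r * χ (-(r * ((1 - r)⁻¹ * z))) := by
    intro χ
    unfold binom Jsum
    rw [Finset.mul_sum, Finset.sum_mul]
    refine Finset.sum_congr rfl fun r _ => ?_
    rw [MulChar.mul_apply, MulChar.inv_apply',
      show -(r * ((1 - r)⁻¹ * z)) = -1 * (r * ((1 - r)⁻¹ * z)) by ring,
      map_mul, map_mul, map_mul]
    ring
  rw [Finset.sum_congr rfl fun χ _ => step χ, Finset.sum_comm]
  have inner : ∀ r : F, (∑ χ : MulChar F ℂ, A r * χ (-(r * ((1 - r)⁻¹ * z))))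
      = A r * (if -(r * ((1 - r)⁻¹ * z)) = 1 then ((Fintype.card F : ℂ) - 1) else 0) := by
    intro r
    rw [← Finset.mul_sum, sum_chars]
  rw [Finset.sum_congr rfl fun r _ => inner r]
  by_cases hz1 : z = 1
  · subst hz1
    rw [show (1:F) - 1 = 0 by ring, MulChar.map_zero, mul_zero]
    refine Finset.sum_eq_zero fun r _ => ?_
    have : ¬(-(r * ((1 - r)⁻¹ * 1)) = 1) := by
      rcases eq_or_ne r 1 with h | h
      · subst h; simp
      · intro hc
        have h1 : (1:F) - r ≠ 0 := sub_ne_zero.mpr (Ne.symm h)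
        field_simp at hc
        exact one_ne_zero (by linear_combination -hc : (1:F) = 0)
    rw [if_neg this, mul_zero]
  · have h1z : (1:F) - z ≠ 0 := sub_ne_zero.mpr (Ne.symm hz1)
    rw [Finset.sum_eq_single ((1-z)⁻¹)]
    · have hr0 : (1:F) - (1-z)⁻¹ = -z / (1 - z) := by field_simp; ring
      have hcond : -((1-z)⁻¹ * ((1 - (1-z)⁻¹)⁻¹ * z)) = 1 := by
        rw [hr0]
        field_simp
      rw [if_pos hcond, MulChar.inv_apply']
      ring
    · intro r _ hr
      have : ¬(-(r * ((1 - r)⁻¹ * z)) = 1) := by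
        rcases eq_or_ne r 1 with h | h
        · subst h; simp
        · intro hc
          have h1 : (1:F) - r ≠ 0 := sub_ne_zero.mpr (Ne.symm h)
          field_simp at hc
          exact hr (eq_inv_of_mul_eq_one_left (by linear_combination hc))
      rw [if_neg this, mul_zero]
    · intro h
      exact absurd (Finset.mem_univ _) h

lemma mc_ne (X : MulChar F ℂ) (a : Fˣ) : X ↑a ≠ 0 := by
  rw [← MulChar.coe_toUnitHom]; exact Units.ne_zero _

lemma mce1 (B B' C χ : MulChar F ℂ) :
    ((B * χ) * ((C * B'⁻¹) * χ)⁻¹)⁻¹ = C * B⁻¹ * B'⁻¹ := by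
  apply MulChar.ext; intro a
  simp only [MulChar.mul_apply, MulChar.inv_apply_eq_inv']
  field_simp [mc_ne B a, mc_ne B' a, mc_ne C a, mc_ne χ a]

lemma mce2 (A' B' C χ : MulChar F ℂ) :
    (((A'⁻¹ * B'⁻¹ * C) * χ) * ((C * A'⁻¹) * χ)⁻¹)⁻¹ = B' := by
  apply MulChar.ext; intro a
  simp only [MulChar.mul_apply, MulChar.inv_apply_eq_inv']
  field_simp [mc_ne A' a, mc_ne B' a, mc_ne C a, mc_ne χ a]

lemma mce3 (A' B B' C χ : MulChar F ℂ) :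
    A'⁻¹ * ((B * χ) * (C * B⁻¹ * B'⁻¹)) = (A'⁻¹ * B'⁻¹ * C) * χ := by
  apply MulChar.ext; intro a
  simp only [MulChar.mul_apply, MulChar.inv_apply_eq_inv']
  field_simp [mc_ne A' a, mc_ne B a, mc_ne B' a, mc_ne C a, mc_ne χ a]

lemma perchi (A' B B' C χ : MulChar F ℂ) :
    B' (-1) * C (-1) *
      (binom (B * χ) ((C * B'⁻¹) * χ) * binom ((A'⁻¹ * B'⁻¹ * C) * χ) ((C * A'⁻¹) * χ))
    = B (-1) * B' (-1) *
      ∑ v : F, ∑ u : F,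
        (B * χ) u * B' v * (C * B⁻¹ * B'⁻¹) (1 - u - v) * A'⁻¹ (1 - v) := by
  have e1 : binom (B * χ) ((C * B'⁻¹) * χ)
      = ((C * B'⁻¹) * χ) (-1) * ((B * χ) (-1) *
          Jsum (B * χ) (C * B⁻¹ * B'⁻¹)) := by
    unfold binom
    rw [Jsum_reflect, mce1]
  have e2 : binom ((A'⁻¹ * B'⁻¹ * C) * χ) ((C * A'⁻¹) * χ)
      = ((C * A'⁻¹) * χ) (-1) * (((A'⁻¹ * B'⁻¹ * C) * χ) (-1) *
          Jsum B' ((A'⁻¹ * B'⁻¹ * C) * χ)) := by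
    unfold binom
    rw [Jsum_reflect, mce2, Jsum_comm]
  have e3 : Jsum B' ((A'⁻¹ * B'⁻¹ * C) * χ) * Jsum (B * χ) (C * B⁻¹ * B'⁻¹)
      = ∑ v : F, ∑ u : F,
          (B * χ) u * B' v * (C * B⁻¹ * B'⁻¹) (1 - u - v) * A'⁻¹ (1 - v) := by
    rw [show Jsum B' ((A'⁻¹ * B'⁻¹ * C) * χ)
        = ∑ v : F, B' v * ((A'⁻¹ * B'⁻¹ * C) * χ) (1 - v) from rfl]
    rw [Finset.sum_mul]
    refine Finset.sum_congr rfl fun v _ => ?_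
    have hW : ((A'⁻¹ * B'⁻¹ * C) * χ) (1 - v)
        = A'⁻¹ (1 - v) * ((B * χ) * (C * B⁻¹ * B'⁻¹)) (1 - v) := by
      rw [← MulChar.mul_apply, mce3]
    rw [hW]
    rcases eq_or_ne v 1 with hv | hv
    · subst hv
      simp [MulChar.map_zero]
    · have hw : (1 : F) - v ≠ 0 := sub_ne_zero.mpr (Ne.symm hv)
      calc B' v * (A'⁻¹ (1 - v) * ((B * χ) * (C * B⁻¹ * B'⁻¹)) (1 - v)) *
            Jsum (B * χ) (C * B⁻¹ * B'⁻¹)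
          = B' v * A'⁻¹ (1 - v) *
              (((B * χ) * (C * B⁻¹ * B'⁻¹)) (1 - v) * Jsum (B * χ) (C * B⁻¹ * B'⁻¹)) := by
            ring
        _ = B' v * A'⁻¹ (1 - v) *
              ∑ u : F, (B * χ) u * (C * B⁻¹ * B'⁻¹) ((1 - v) - u) := by
            rw [sum_shift_scale _ _ hw]
        _ = ∑ u : F, (B * χ) u * B' v * (C * B⁻¹ * B'⁻¹) (1 - u - v) * A'⁻¹ (1 - v) := by
            rw [Finset.mul_sum]
            refine Finset.sum_congr rfl fun u _ => ?_
            rw [show (1 : F) - v - u = 1 - u - v by ring]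
            ring
  rw [e1, e2, ← e3]
  simp only [MulChar.mul_apply, invAtNeg]
  have hB := sq_one B
  have hB' := sq_one B'
  have hC := sq_one C
  have hA' := sq_one A'
  have hK := sq_one χ
  set j := Jsum B' ((A'⁻¹ * B'⁻¹ * C) * χ) * Jsum (B * χ) (C * B⁻¹ * B'⁻¹) with hj
  linear_combination (j * B (-1) * B' (-1) *
      (C (-1)^4 * A' (-1)^2 * χ (-1)^4)) * hB' +
    (j * B (-1) * B' (-1) * (A' (-1)^2 * χ (-1)^4) * (C (-1)^2 + 1)) * hC +
    (j * B (-1) * B' (-1) * χ (-1)^4) * hA' +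
    (j * B (-1) * B' (-1) * (χ (-1)^2 + 1)) * hK

lemma ulem (A B : MulChar F ℂ) {x : F} (hx : x ≠ 0) (u : F) :
    B u * ∑ χ : MulChar F ℂ, binom (A * χ) χ * χ (x * u)
      = B u * (((Fintype.card F : ℂ) - 1) * A⁻¹ (1 - u * x)) := by
  rcases eq_or_ne u 0 with h | h
  · subst h; rw [MulChar.map_zero, zero_mul, zero_mul]
  · rw [sum_binom A (mul_ne_zero hx h), mul_comm u x]

theorem AF3_y_eq_one (A A' B B' C : MulChar F ℂ) (x : F) :
    AF3 A A' B B' C x 1 =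
      B' (-1) * C (-1) * H3F2 A B (A'⁻¹ * B'⁻¹ * C) (C * B'⁻¹) (C * A'⁻¹) x := by
  unfold AF3 H3F2
  by_cases hx : x = 0
  · subst hx
    rw [zero_mul, MulChar.map_zero, zero_mul, zero_mul, zero_mul,
      Finset.sum_eq_zero fun χ _ => by rw [MulChar.map_zero, mul_zero]]
    simp
  · have h1c : (Fintype.card F : ℂ) ≠ 1 := by
      have h2 : 1 < Fintype.card F := Fintype.one_lt_card
      exact_mod_cast Nat.ne_of_gt h2
    have hq1 : ((Fintype.card F : ℂ) - 1) ≠ 0 := sub_ne_zero.mpr h1c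
    rw [mul_one, MulChar.one_apply (isUnit_iff_ne_zero.mpr hx), one_mul]
    simp only [mul_one]
    have main : ∀ χ : MulChar F ℂ,
        B' (-1) * C (-1) * (binom (A * χ) χ * binom (B * χ) ((C * B'⁻¹) * χ) *
          binom ((A'⁻¹ * B'⁻¹ * C) * χ) ((C * A'⁻¹) * χ) * χ x)
        = ∑ v : F, ∑ u : F, binom (A * χ) χ * χ (x * u) *
            (B (-1) * B' (-1) *
              (B u * B' v * (C * B⁻¹ * B'⁻¹) (1 - u - v) * A'⁻¹ (1 - v))) := by
      intro χ
      have h1 := perchi A' B B' C χ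
      calc B' (-1) * C (-1) * (binom (A * χ) χ * binom (B * χ) ((C * B'⁻¹) * χ) *
            binom ((A'⁻¹ * B'⁻¹ * C) * χ) ((C * A'⁻¹) * χ) * χ x)
          = binom (A * χ) χ * χ x * (B' (-1) * C (-1) *
              (binom (B * χ) ((C * B'⁻¹) * χ) *
                binom ((A'⁻¹ * B'⁻¹ * C) * χ) ((C * A'⁻¹) * χ))) := by ring
        _ = binom (A * χ) χ * χ x * (B (-1) * B' (-1) *
              ∑ v : F, ∑ u : F,
                (B * χ) u * B' v * (C * B⁻¹ * B'⁻¹) (1 - u - v) * A'⁻¹ (1 - v)) := by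
            rw [h1]
        _ = ∑ v : F, ∑ u : F, binom (A * χ) χ * χ (x * u) *
            (B (-1) * B' (-1) *
              (B u * B' v * (C * B⁻¹ * B'⁻¹) (1 - u - v) * A'⁻¹ (1 - v))) := by
            simp only [Finset.mul_sum]
            refine Finset.sum_congr rfl fun v _ => Finset.sum_congr rfl fun u _ => ?_
            simp only [MulChar.mul_apply, map_mul]
            ring
    have hS : ∑ χ : MulChar F ℂ,
        B' (-1) * C (-1) * (binom (A * χ) χ * binom (B * χ) ((C * B'⁻¹) * χ) *
          binom ((A'⁻¹ * B'⁻¹ * C) * χ) ((C * A'⁻¹) * χ) * χ x)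
        = ((Fintype.card F : ℂ) - 1) * ∑ v : F, ∑ u : F,
            B (-1) * B' (-1) * (B u * B' v * (C * B⁻¹ * B'⁻¹) (1 - u - v) *
              A⁻¹ (1 - u * x) * A'⁻¹ (1 - v)) := by
      rw [Finset.sum_congr rfl fun χ _ => main χ, Finset.sum_comm]
      rw [Finset.sum_congr rfl fun v (_ : v ∈ Finset.univ) => Finset.sum_comm]
      rw [Finset.mul_sum]
      refine Finset.sum_congr rfl fun v _ => ?_
      rw [Finset.mul_sum]
      refine Finset.sum_congr rfl fun u _ => ?_
      rw [← Finset.sum_mul]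
      have h := ulem A B hx u
      linear_combination (B (-1) * B' (-1) *
        (B' v * (C * B⁻¹ * B'⁻¹) (1 - u - v) * A'⁻¹ (1 - v))) * h
    have hpull : B' (-1) * C (-1) * ((1 / ((Fintype.card F : ℂ) - 1)) *
        ∑ χ : MulChar F ℂ, binom (A * χ) χ * binom (B * χ) ((C * B'⁻¹) * χ) *
          binom ((A'⁻¹ * B'⁻¹ * C) * χ) ((C * A'⁻¹) * χ) * χ x)
        = (1 / ((Fintype.card F : ℂ) - 1)) *
          ∑ χ : MulChar F ℂ,
            B' (-1) * C (-1) * (binom (A * χ) χ * binom (B * χ) ((C * B'⁻¹) * χ) *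
              binom ((A'⁻¹ * B'⁻¹ * C) * χ) ((C * A'⁻¹) * χ) * χ x) := by
      simp only [Finset.mul_sum]
      exact Finset.sum_congr rfl fun χ _ => by ring
    rw [hpull, hS, ← mul_assoc, one_div_mul_cancel hq1, one_mul]
    simp only [Finset.mul_sum]
    exact Finset.sum_comm
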